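/- For all real numbers θ₀, θ₁, ψ₀, ψ₁, with α = θ₀ − ψ₀, β = θ₀ − ψ₁, γ = θ₁ − ψ₀, δ = θ₁ − ψ₁, one has (1/4)·(cos α² + sin β² + (1/2)·cos γ² + cos δ²) ≤ (1/4)·(7/4 + (3·√3)/4), and there exist θ₀, θ₁, ψ₀, ψ₁ attaining equality. Hence the maximum quantum success probability of the paper's partition 2+2+2+1 game equals (1/4)(7/4 + 3√3/4) ≈ 0.762. -/
import Mathlib

open Real

private lemma amp (a b x : ℝ) : a * Real.cos x + b * Real.sin x ≤ Real.sqrt (a ^ 2 + b ^ 2) := by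
  have hnn : (0:ℝ) ≤ a ^ 2 + b ^ 2 := by positivity
  have hs : Real.sqrt (a ^ 2 + b ^ 2) ^ 2 = a ^ 2 + b ^ 2 := Real.sq_sqrt hnn
  have hs0 : 0 ≤ Real.sqrt (a ^ 2 + b ^ 2) := Real.sqrt_nonneg _
  have hpyth := Real.sin_sq_add_cos_sq x
  nlinarith [sq_nonneg (a * Real.sin x - b * Real.cos x),
    sq_nonneg (Real.sqrt (a ^ 2 + b ^ 2) - (a * Real.cos x + b * Real.sin x))]

private lemma key (c : ℝ) (h1 : -1 ≤ c) (h2 : c ≤ 1) :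
    Real.sqrt (1 / 2 - c / 2) + Real.sqrt (5 / 16 + c / 4) ≤ 3 * Real.sqrt 3 / 4 := by
  have hA : Real.sqrt (1 / 2 - c / 2) ^ 2 = 1 / 2 - c / 2 := Real.sq_sqrt (by linarith)
  have hB : Real.sqrt (5 / 16 + c / 4) ^ 2 = 5 / 16 + c / 4 := Real.sq_sqrt (by linarith)
  have hA0 : 0 ≤ Real.sqrt (1 / 2 - c / 2) := Real.sqrt_nonneg _
  have hB0 : 0 ≤ Real.sqrt (5 / 16 + c / 4) := Real.sqrt_nonneg _
  have hS : Real.sqrt 3 ^ 2 = 3 := Real.sq_sqrt (by norm_num)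
  have hS1 : 1 ≤ Real.sqrt 3 := by nlinarith [Real.sqrt_nonneg 3]
  set A := Real.sqrt (1 / 2 - c / 2)
  set B := Real.sqrt (5 / 16 + c / 4)
  have hsum : A ^ 2 + 2 * B ^ 2 = 9 / 8 := by rw [hA, hB]; ring
  nlinarith [sq_nonneg (A - 2 * B), sq_nonneg (3 * Real.sqrt 3 / 4 - (A + B)),
    mul_nonneg hA0 hB0]

/-- The maximum quantum success probability of the paper's partition 2+2+2+1
game equals `(1/4)(7/4 + 3√3/4) ≈ 0.762`. -/
theorem partition_2221_quantum_value :
    (∀ θ₀ θ₁ ψ₀ ψ₁ : ℝ,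
      (1 / 4) * (cos (θ₀ - ψ₀) ^ 2 + sin (θ₀ - ψ₁) ^ 2 +
        (1 / 2) * cos (θ₁ - ψ₀) ^ 2 + cos (θ₁ - ψ₁) ^ 2)
        ≤ (1 / 4) * (7 / 4 + (3 * Real.sqrt 3) / 4)) ∧
    (∃ θ₀ θ₁ ψ₀ ψ₁ : ℝ,
      (1 / 4) * (cos (θ₀ - ψ₀) ^ 2 + sin (θ₀ - ψ₁) ^ 2 +
        (1 / 2) * cos (θ₁ - ψ₀) ^ 2 + cos (θ₁ - ψ₁) ^ 2)
        = (1 / 4) * (7 / 4 + (3 * Real.sqrt 3) / 4)) := by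
  constructor
  · intro θ₀ θ₁ ψ₀ ψ₁
    set c := Real.cos (2 * (ψ₁ - ψ₀)) with hc
    set s := Real.sin (2 * (ψ₁ - ψ₀)) with hs
    have hcs : s ^ 2 + c ^ 2 = 1 := Real.sin_sq_add_cos_sq _
    have hc1 : -1 ≤ c := Real.neg_one_le_cos _
    have hc2 : c ≤ 1 := Real.cos_le_one _
    -- double angle rewrites
    have e0 : Real.cos (θ₀ - ψ₀) ^ 2 = 1 / 2 + Real.cos (2 * (θ₀ - ψ₀)) / 2 := Real.cos_sq _
    have e1 : Real.sin (θ₀ - ψ₁) ^ 2 = 1 / 2 - Real.cos (2 * (θ₀ - ψ₁)) / 2 := by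
      have := Real.cos_sq (θ₀ - ψ₁)
      have h2 := Real.sin_sq_add_cos_sq (θ₀ - ψ₁)
      linarith
    have e2 : Real.cos (θ₁ - ψ₀) ^ 2 = 1 / 2 + Real.cos (2 * (θ₁ - ψ₀)) / 2 := Real.cos_sq _
    have e3 : Real.cos (θ₁ - ψ₁) ^ 2 = 1 / 2 + Real.cos (2 * (θ₁ - ψ₁)) / 2 := Real.cos_sq _
    -- express cos(2(θ-ψ₀)) via cos(2(θ-ψ₁)) and c, s
    have f0 : Real.cos (2 * (θ₀ - ψ₀)) =
        Real.cos (2 * (θ₀ - ψ₁)) * c - Real.sin (2 * (θ₀ - ψ₁)) * s := by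
      rw [hc, hs, ← Real.cos_add]; ring_nf
    have f1 : Real.cos (2 * (θ₁ - ψ₀)) =
        Real.cos (2 * (θ₁ - ψ₁)) * c - Real.sin (2 * (θ₁ - ψ₁)) * s := by
      rw [hc, hs, ← Real.cos_add]; ring_nf
    -- bound the θ₀ part
    have b0 : Real.cos (2 * (θ₀ - ψ₀)) / 2 - Real.cos (2 * (θ₀ - ψ₁)) / 2
        ≤ Real.sqrt (1 / 2 - c / 2) := by
      have h := amp (c / 2 - 1 / 2) (-s / 2) (2 * (θ₀ - ψ₁))
      have heq : (c / 2 - 1 / 2) ^ 2 + (-s / 2) ^ 2 = 1 / 2 - c / 2 := by nlinarith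
      rw [heq] at h
      calc Real.cos (2 * (θ₀ - ψ₀)) / 2 - Real.cos (2 * (θ₀ - ψ₁)) / 2
          = (c / 2 - 1 / 2) * Real.cos (2 * (θ₀ - ψ₁)) +
            (-s / 2) * Real.sin (2 * (θ₀ - ψ₁)) := by rw [f0]; ring
        _ ≤ _ := h
    -- bound the θ₁ part
    have b1 : Real.cos (2 * (θ₁ - ψ₀)) / 4 + Real.cos (2 * (θ₁ - ψ₁)) / 2
        ≤ Real.sqrt (5 / 16 + c / 4) := by
      have h := amp (c / 4 + 1 / 2) (-s / 4) (2 * (θ₁ - ψ₁))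
      have heq : (c / 4 + 1 / 2) ^ 2 + (-s / 4) ^ 2 = 5 / 16 + c / 4 := by nlinarith
      rw [heq] at h
      calc Real.cos (2 * (θ₁ - ψ₀)) / 4 + Real.cos (2 * (θ₁ - ψ₁)) / 2
          = (c / 4 + 1 / 2) * Real.cos (2 * (θ₁ - ψ₁)) +
            (-s / 4) * Real.sin (2 * (θ₁ - ψ₁)) := by rw [f1]; ring
        _ ≤ _ := h
    have hk := key c hc1 hc2
    rw [e0, e1, e2, e3]
    linarith
  · refine ⟨-(π / 12), π / 4, 0, π / 3, ?_⟩
    have s3 : Real.sqrt 3 ^ 2 = 3 := Real.sq_sqrt (by norm_num)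
    have h1 : Real.cos (-(π / 12) - 0) ^ 2 = 1 / 2 + Real.sqrt 3 / 4 := by
      rw [Real.cos_sq]
      have : 2 * (-(π / 12) - 0) = -(π / 6) := by ring
      rw [this, Real.cos_neg, Real.cos_pi_div_six]
      ring
    have h2 : Real.sin (-(π / 12) - π / 3) ^ 2 = 1 / 2 + Real.sqrt 3 / 4 := by
      have hc : Real.cos (-(π / 12) - π / 3) ^ 2 = 1 / 2 - Real.sqrt 3 / 4 := by
        rw [Real.cos_sq]
        have : 2 * (-(π / 12) - π / 3) = -(π - π / 6) := by ring
        rw [this, Real.cos_neg, Real.cos_pi_sub, Real.cos_pi_div_six]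
        ring
      have := Real.sin_sq_add_cos_sq (-(π / 12) - π / 3)
      linarith
    have h3 : Real.cos (π / 4 - 0) ^ 2 = 1 / 2 := by
      rw [Real.cos_sq]
      have : 2 * (π / 4 - 0) = π / 2 := by ring
      rw [this, Real.cos_pi_div_two]
      ring
    have h4 : Real.cos (π / 4 - π / 3) ^ 2 = 1 / 2 + Real.sqrt 3 / 4 := by
      rw [Real.cos_sq]
      have : 2 * (π / 4 - π / 3) = -(π / 6) := by ring
      rw [this, Real.cos_neg, Real.cos_pi_div_six]
      ring
    rw [h1, h2, h3, h4]
    ring
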